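/- arXiv:0906.1441 — 9 statements merged into one kernel-verified Lean document; each statement's English description precedes it below -/
import Mathlib

section
/- Let A be a noetherian commutative ring graded by an abelian group ι, and let P be a homogeneous ideal of A. Then P is G-prime (i.e., P = 𝔭* for some prime ideal 𝔭 of A) if and only if P ≠ A and for all homogeneous ideals I, J of A with I·J ⊆ P, either I ⊆ P or J ⊆ P. -/
/-! Since `𝔭*` is the largest homogeneous ideal in `𝔭`, a homogeneous ideal lies in `𝔭*` as soon as
it lies in `𝔭`, so `𝔭*` inherits the product condition from the primality of `𝔭`. Conversely, the
condition applied to principal ideals of homogeneous elements says that the homogeneous elements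
outside `P` form a multiplicative set `S`. A prime `𝔭 ⊇ P` disjoint from `S` contains no
homogeneous element outside `P`, hence `𝔭* = P`. -/

/-- A homogeneous ideal `P` of a graded ring `A` is `G`-prime if `P = 𝔭*`
(the homogeneous core, i.e. the largest homogeneous ideal contained in `𝔭`)
for some prime ideal `𝔭` of `A`. -/
def Ideal.IsGPrime {ι : Type*} [AddCommGroup ι] [DecidableEq ι] {A : Type*} [CommRing A]
    (𝒜 : ι → AddSubgroup A) [GradedRing 𝒜] (P : Ideal A) : Prop :=
  ∃ 𝔭 : Ideal A, 𝔭.IsPrime ∧ P = (𝔭.homogeneousCore 𝒜).toIdeal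

namespace Ideal

variable {ι A σ : Type*} [CommSemiring A] [SetLike σ A] {𝒜 : ι → σ} {I J P 𝔭 : Ideal A}
  [DecidableEq ι] [AddMonoid ι] [AddSubmonoidClass σ A] [GradedRing 𝒜]

theorem homogeneousCore_le_iff :
    (I.homogeneousCore 𝒜).toIdeal ≤ J ↔ ∀ x ∈ I, SetLike.IsHomogeneousElem 𝒜 x → x ∈ J :=
  ⟨fun h _ hx hxh => h (mem_homogeneousCore_of_homogeneous_of_mem hxh hx),
    fun h => span_le.2 <| by rintro _ ⟨⟨x, hxh⟩, hx, rfl⟩; exact h x hx hxh⟩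

theorem IsHomogeneous.le_homogeneousCore_iff (hI : I.IsHomogeneous 𝒜) :
    I ≤ (J.homogeneousCore 𝒜).toIdeal ↔ I ≤ J :=
  ⟨fun h => h.trans (toIdeal_homogeneousCore_le 𝒜 J),
    fun h => hI.toIdeal_homogeneousCore_eq_self ▸ homogeneousCore_mono 𝒜 h⟩

theorem IsPrime.le_homogeneousCore_or_le_of_mul_le (h𝔭 : 𝔭.IsPrime)
    (hI : I.IsHomogeneous 𝒜) (hJ : J.IsHomogeneous 𝒜)
    (hIJ : I * J ≤ (𝔭.homogeneousCore 𝒜).toIdeal) :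
    I ≤ (𝔭.homogeneousCore 𝒜).toIdeal ∨ J ≤ (𝔭.homogeneousCore 𝒜).toIdeal := by
  rw [hI.le_homogeneousCore_iff, hJ.le_homogeneousCore_iff]
  exact h𝔭.mul_le.1 (hIJ.trans (toIdeal_homogeneousCore_le 𝒜 𝔭))

theorem mem_or_mem_of_homogeneous_of_mul_mem
    (hP : ∀ I J : Ideal A, I.IsHomogeneous 𝒜 → J.IsHomogeneous 𝒜 → I * J ≤ P → I ≤ P ∨ J ≤ P)
    {a b : A} (ha : SetLike.IsHomogeneousElem 𝒜 a) (hb : SetLike.IsHomogeneousElem 𝒜 b)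
    (hab : a * b ∈ P) : a ∈ P ∨ b ∈ P := by
  have hspan {x : A} (hx : SetLike.IsHomogeneousElem 𝒜 x) : (span {x}).IsHomogeneous 𝒜 :=
    homogeneous_span 𝒜 _ fun _ hy => (Set.mem_singleton_iff.1 hy) ▸ hx
  have hab' : span {a} * span {b} ≤ P := by
    rwa [span_singleton_mul_span_singleton, span_singleton_le_iff_mem]
  simpa only [span_singleton_le_iff_mem] using hP _ _ (hspan ha) (hspan hb) hab'

theorem exists_isPrime_homogeneousCore_eq (hP : P.IsHomogeneous 𝒜) (hP_ne_top : P ≠ ⊤)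
    (hmul : ∀ a b : A, SetLike.IsHomogeneousElem 𝒜 a → SetLike.IsHomogeneousElem 𝒜 b →
      a * b ∈ P → a ∈ P ∨ b ∈ P) :
    ∃ 𝔭 : Ideal A, 𝔭.IsPrime ∧ P = (𝔭.homogeneousCore 𝒜).toIdeal := by
  let S : Submonoid A :=
    { carrier := {x | SetLike.IsHomogeneousElem 𝒜 x ∧ x ∉ P}
      one_mem' := ⟨SetLike.isHomogeneousElem_one 𝒜, (ne_top_iff_one P).1 hP_ne_top⟩
      mul_mem' := fun {a b} ⟨ha, haP⟩ ⟨hb, hbP⟩ =>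
        ⟨ha.mul hb, fun hab => (hmul a b ha hb hab).elim haP hbP⟩ }
  obtain ⟨𝔭, h𝔭, hP𝔭, h𝔭S⟩ :=
    exists_le_prime_disjoint P S (Set.disjoint_left.2 fun _ hx hxS => hxS.2 hx)
  refine ⟨𝔭, h𝔭, le_antisymm (hP.le_homogeneousCore_iff.2 hP𝔭) ?_⟩
  exact homogeneousCore_le_iff.2 fun x hx hxh =>
    by_contra fun hxP => Set.disjoint_left.1 h𝔭S hx ⟨hxh, hxP⟩

end Ideal

theorem Ideal.isGPrime_iff_general {ι : Type*} [AddCommGroup ι] [DecidableEq ι] {A : Type*} [CommRing A]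
    (𝒜 : ι → AddSubgroup A) [GradedRing 𝒜]
    (P : Ideal A) (hP : P.IsHomogeneous 𝒜) :
    P.IsGPrime 𝒜 ↔
      P ≠ ⊤ ∧ ∀ I J : Ideal A, I.IsHomogeneous 𝒜 → J.IsHomogeneous 𝒜 →
        I * J ≤ P → I ≤ P ∨ J ≤ P := by
  constructor
  · rintro ⟨𝔭, h𝔭, rfl⟩
    exact ⟨ne_top_of_le_ne_top h𝔭.ne_top (toIdeal_homogeneousCore_le 𝒜 𝔭),
      fun I J hI hJ => h𝔭.le_homogeneousCore_or_le_of_mul_le hI hJ⟩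
  · rintro ⟨hP_ne_top, hprime⟩
    exact exists_isPrime_homogeneousCore_eq hP hP_ne_top
      fun a b => mem_or_mem_of_homogeneous_of_mul_mem hprime

/-- A homogeneous ideal `P` of a noetherian graded ring is `G`-prime if and only if
`P ≠ A` and for all homogeneous ideals `I`, `J` with `I·J ⊆ P`, either `I ⊆ P` or `J ⊆ P`. -/
theorem Ideal.isGPrime_iff {ι : Type*} [AddCommGroup ι] [DecidableEq ι] {A : Type*} [CommRing A]
    [IsNoetherianRing A] (𝒜 : ι → AddSubgroup A) [GradedRing 𝒜]
    (P : Ideal A) (hP : P.IsHomogeneous 𝒜) :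
    P.IsGPrime 𝒜 ↔
      P ≠ ⊤ ∧ ∀ I J : Ideal A, I.IsHomogeneous 𝒜 → J.IsHomogeneous 𝒜 →
        I * J ≤ P → I ≤ P ∨ J ≤ P :=
  Ideal.isGPrime_iff_general 𝒜 P hP
end

section
/- Let A be a noetherian commutative ring graded by an abelian group ι, and let P be a G-prime homogeneous ideal of A. Then for every minimal prime 𝔭 over P (i.e., 𝔭 ∈ minimalPrimes of P), one has 𝔭* = P. -/
/-- If `𝔭` is a minimal prime over `P` and `y ∈ 𝔭`, then `s * y ^ n ∈ P` for some `s ∉ 𝔭`. -/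
lemma exists_nmem_mul_pow_mem_of_mem_minimalPrimes {A : Type*} [CommRing A] {P 𝔭 : Ideal A}
    (h𝔭 : 𝔭 ∈ P.minimalPrimes) {y : A} (hy : y ∈ 𝔭) :
    ∃ s, s ∉ 𝔭 ∧ ∃ n : ℕ, s * y ^ n ∈ P := by
  have h𝔭p : 𝔭.IsPrime := h𝔭.1.1
  by_contra hcon
  push_neg at hcon
  set S : Submonoid A :=
    { carrier := {x | ∃ s, s ∉ 𝔭 ∧ ∃ n : ℕ, x = s * y ^ n}
      mul_mem' := by
        rintro a b ⟨s₁, hs₁, n₁, rfl⟩ ⟨s₂, hs₂, n₂, rfl⟩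
        exact ⟨s₁ * s₂, fun h => (h𝔭p.mem_or_mem h).elim hs₁ hs₂, n₁ + n₂, by ring⟩
      one_mem' := ⟨1, (Ideal.ne_top_iff_one 𝔭).mp h𝔭p.ne_top, 0, by ring⟩ } with hS
  have hdisj : Disjoint (P : Set A) (S : Set A) := by
    rw [Set.disjoint_left]
    rintro x hxP ⟨s, hs, n, rfl⟩
    exact hcon s hs n hxP
  obtain ⟨q, hq, hPq, hqdisj⟩ := Ideal.exists_le_prime_disjoint P S hdisj
  have hq𝔭 : q ≤ 𝔭 := by
    intro x hx
    by_contra hx𝔭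
    exact Set.disjoint_left.mp hqdisj hx ⟨x, hx𝔭, 0, by ring⟩
  have : 𝔭 ≤ q := h𝔭.2 ⟨hq, hPq⟩ hq𝔭
  exact Set.disjoint_left.mp hqdisj (this hy)
    ⟨1, (Ideal.ne_top_iff_one 𝔭).mp h𝔭p.ne_top, 1, by ring⟩

/-- If `P` is a `G`-prime homogeneous ideal of a noetherian graded ring, then `𝔭* = P`
for every minimal prime `𝔭` over `P`. -/
theorem Ideal.IsGPrime.homogeneousCore_minimalPrimes {ι : Type*} [AddCommGroup ι] [DecidableEq ι]
    {A : Type*} [CommRing A] [IsNoetherianRing A] (𝒜 : ι → AddSubgroup A) [GradedRing 𝒜]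
    (P : Ideal A) (hPhom : P.IsHomogeneous 𝒜) (hP : P.IsGPrime 𝒜) :
    ∀ 𝔭 ∈ P.minimalPrimes, (𝔭.homogeneousCore 𝒜).toIdeal = P := by
  classical
  intro 𝔭 h𝔭
  obtain ⟨q, hq, hPq⟩ := hP
  have hcore_le : (q.homogeneousCore 𝒜).toIdeal ≤ q := Ideal.toIdeal_homogeneousCore_le 𝒜 q
  -- key: every homogeneous element of 𝔭 lies in P
  have key : ∀ (i : ι) (y : A), y ∈ 𝒜 i → y ∈ 𝔭 → y ∈ P := by
    intro i y hyi hy𝔭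
    obtain ⟨s, hs, n, hsP⟩ := exists_nmem_mul_pow_mem_of_mem_minimalPrimes h𝔭 hy𝔭
    have hj : ∃ j, (DirectSum.decompose 𝒜 s j : A) ∉ 𝔭 := by
      by_contra h
      push_neg at h
      exact hs (by
        rw [← DirectSum.sum_support_decompose 𝒜 s]
        exact Ideal.sum_mem _ fun j _ => h j)
    obtain ⟨j, hj⟩ := hj
    have hyn : y ^ n ∈ 𝒜 (n • i) := SetLike.pow_mem_graded n hyi
    have hcomp : (DirectSum.decompose 𝒜 s j : A) * y ^ n ∈ P := by
      have h1 := hPhom (j + n • i) hsP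
      rwa [DirectSum.coe_decompose_mul_add_of_right_mem 𝒜 hyn] at h1
    have hcompq : (DirectSum.decompose 𝒜 s j : A) * y ^ n ∈ q := hcore_le (hPq ▸ hcomp)
    rcases hq.mem_or_mem hcompq with h | h
    · -- the homogeneous component lies in q, hence in P, hence in 𝔭: contradiction
      exact absurd (h𝔭.1.2 (hPq ▸ Ideal.mem_homogeneousCore_of_homogeneous_of_mem
        ⟨j, SetLike.coe_mem _⟩ h)) hj
    · have hyq : y ∈ q := hq.mem_of_pow_mem n h
      exact hPq ▸ Ideal.mem_homogeneousCore_of_homogeneous_of_mem ⟨i, hyi⟩ hyq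
  refine le_antisymm ?_ ?_
  · intro x hx
    rw [← DirectSum.sum_support_decompose 𝒜 x]
    refine Ideal.sum_mem _ fun i _ => key i _ (SetLike.coe_mem _) ?_
    exact Ideal.toIdeal_homogeneousCore_le 𝒜 𝔭 ((𝔭.homogeneousCore 𝒜).isHomogeneous i hx)
  · intro x hx
    rw [← DirectSum.sum_support_decompose 𝒜 x]
    exact Ideal.sum_mem _ fun i _ => Ideal.mem_homogeneousCore_of_homogeneous_of_mem
      ⟨i, SetLike.coe_mem _⟩ (h𝔭.1.2 (hPhom i hx))
end

section
/- Let A be a commutative ring graded by an abelian group ι, and let M be a maximal element of the set of proper homogeneous ideals of A (a G-maximal G-ideal). Then: (1) for all homogeneous ideals I, J of A with I·J ⊆ M, either I ⊆ M or J ⊆ M; and (2) M = 𝔪* for some maximal ideal 𝔪 of A; in particular M is G-prime. -/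
namespace Ideal

variable {ι σ A : Type*}

theorem le_of_sup_eq_top_of_mul_le [CommSemiring A] {M I J : Ideal A} (hMI : M ⊔ I = ⊤)
    (hIJ : I * J ≤ M) : J ≤ M :=
  calc J ≤ M ⊔ J := le_sup_right
    _ = M ⊔ I * J := (sup_mul_eq_of_coprime_left hMI).symm
    _ = M := sup_eq_left.mpr hIJ

variable [DecidableEq ι] [AddMonoid ι] [SetLike σ A]

section Semiring

variable [Semiring A] [AddSubmonoidClass σ A] (𝒜 : ι → σ) [GradedRing 𝒜]

theorem IsHomogeneous.le_homogeneousCore {I J : Ideal A} (hI : I.IsHomogeneous 𝒜) (hIJ : I ≤ J) :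
    I ≤ (J.homogeneousCore 𝒜).toIdeal :=
  hI.toIdeal_homogeneousCore_eq_self ▸ homogeneousCore_mono 𝒜 hIJ

theorem toIdeal_homogeneousCore_ne_top {I : Ideal A} (hI : I ≠ ⊤) :
    (I.homogeneousCore 𝒜).toIdeal ≠ ⊤ :=
  ne_top_of_le_ne_top hI (I.toIdeal_homogeneousCore_le 𝒜)

structure IsGMaximal (M : Ideal A) : Prop where
  isHomogeneous : M.IsHomogeneous 𝒜
  ne_top : M ≠ ⊤
  eq_of_le : ∀ I : Ideal A, I.IsHomogeneous 𝒜 → I ≠ ⊤ → M ≤ I → I = M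

variable {𝒜}

theorem IsGMaximal.eq_homogeneousCore_of_le {M 𝔪 : Ideal A} (hM : M.IsGMaximal 𝒜)
    (h𝔪 : 𝔪 ≠ ⊤) (hM𝔪 : M ≤ 𝔪) : M = (𝔪.homogeneousCore 𝒜).toIdeal :=
  (hM.eq_of_le _ (HomogeneousIdeal.isHomogeneous _) (toIdeal_homogeneousCore_ne_top 𝒜 h𝔪)
    (hM.isHomogeneous.le_homogeneousCore 𝒜 hM𝔪)).symm

theorem IsGMaximal.exists_isMaximal_eq_homogeneousCore {M : Ideal A} (hM : M.IsGMaximal 𝒜) :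
    ∃ 𝔪 : Ideal A, 𝔪.IsMaximal ∧ M = (𝔪.homogeneousCore 𝒜).toIdeal :=
  have ⟨𝔪, h𝔪, hM𝔪⟩ := M.exists_le_maximal hM.ne_top
  ⟨𝔪, h𝔪, hM.eq_homogeneousCore_of_le h𝔪.ne_top hM𝔪⟩

end Semiring

variable [CommSemiring A] [AddSubmonoidClass σ A] {𝒜 : ι → σ} [GradedRing 𝒜]

theorem IsGMaximal.sup_eq_top {M I : Ideal A} (hM : M.IsGMaximal 𝒜) (hI : I.IsHomogeneous 𝒜)
    (hIM : ¬I ≤ M) : M ⊔ I = ⊤ := by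
  by_contra hne
  exact hIM (hM.eq_of_le _ (hM.isHomogeneous.sup hI) hne le_sup_left ▸ le_sup_right)

theorem IsGMaximal.le_or_le_of_mul_le {M I J : Ideal A} (hM : M.IsGMaximal 𝒜)
    (hI : I.IsHomogeneous 𝒜) (hIJ : I * J ≤ M) : I ≤ M ∨ J ≤ M :=
  or_iff_not_imp_left.mpr fun hIM ↦ le_of_sup_eq_top_of_mul_le (hM.sup_eq_top hI hIM) hIJ

end Ideal

/-- Let `M` be a maximal element of the set of proper homogeneous ideals of a graded ring `A`
(a `G`-maximal `G`-ideal).  Then (1) `M` is `G`-quasi-prime: for homogeneous ideals `I`, `J`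
with `I·J ⊆ M`, either `I ⊆ M` or `J ⊆ M`; and (2) `M = 𝔪*` for some maximal ideal `𝔪` of `A`;
in particular `M` is `G`-prime. -/
theorem Ideal.gMaximal_isGPrime {ι : Type*} [AddCommGroup ι] [DecidableEq ι]
    {A : Type*} [CommRing A] (𝒜 : ι → AddSubgroup A) [GradedRing 𝒜]
    (M : Ideal A) (hMhom : M.IsHomogeneous 𝒜) (hMne : M ≠ ⊤)
    (hMmax : ∀ I : Ideal A, I.IsHomogeneous 𝒜 → I ≠ ⊤ → M ≤ I → I = M) :
    (∀ I J : Ideal A, I.IsHomogeneous 𝒜 → J.IsHomogeneous 𝒜 →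
        I * J ≤ M → I ≤ M ∨ J ≤ M) ∧
      (∃ 𝔪 : Ideal A, 𝔪.IsMaximal ∧ M = (𝔪.homogeneousCore 𝒜).toIdeal) ∧
      M.IsGPrime 𝒜 := by
  have hM : M.IsGMaximal 𝒜 := ⟨hMhom, hMne, hMmax⟩
  obtain ⟨𝔪, h𝔪, hM𝔪⟩ := hM.exists_isMaximal_eq_homogeneousCore
  exact ⟨fun I J hI _ hIJ ↦ hM.le_or_le_of_mul_le hI hIJ, ⟨𝔪, h𝔪, hM𝔪⟩, ⟨𝔪, h𝔪.isPrime, hM𝔪⟩⟩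
end

section
/- Let A be a noetherian commutative ring graded by an abelian group ι, and let I be a homogeneous ideal of A. Then the intersection of all G-prime homogeneous ideals of A containing I equals (√I)*, the homogeneous core of the radical of I (where the intersection over the empty family is A). -/
/-- For a homogeneous ideal `I` of a noetherian graded ring `A`, the intersection of all
`G`-prime homogeneous ideals containing `I` (which is `A` if there are none) equals `(√I)*`,
the homogeneous core of the radical of `I`. -/
theorem Ideal.sInf_gPrimes_eq_homogeneousCore_radical {ι : Type*} [AddCommGroup ι]
    [DecidableEq ι] {A : Type*} [CommRing A] [IsNoetherianRing A]
    (𝒜 : ι → AddSubgroup A) [GradedRing 𝒜] (I : Ideal A) (hI : I.IsHomogeneous 𝒜) :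
    sInf {P : Ideal A | P.IsGPrime 𝒜 ∧ I ≤ P} = (I.radical.homogeneousCore 𝒜).toIdeal := by
  apply le_antisymm
  · -- sInf is homogeneous and contained in radical I
    have hhom : (sInf {P : Ideal A | P.IsGPrime 𝒜 ∧ I ≤ P}).IsHomogeneous 𝒜 := by
      apply Ideal.IsHomogeneous.sInf
      rintro P ⟨⟨𝔭, -, rfl⟩, -⟩
      exact (𝔭.homogeneousCore 𝒜).isHomogeneous
    have hle : sInf {P : Ideal A | P.IsGPrime 𝒜 ∧ I ≤ P} ≤ I.radical := by
      rw [Ideal.radical_eq_sInf]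
      apply le_sInf
      rintro 𝔭 ⟨hI𝔭, h𝔭⟩
      refine le_trans (sInf_le ?_) (𝔭.toIdeal_homogeneousCore_le 𝒜)
      refine ⟨⟨𝔭, h𝔭, rfl⟩, ?_⟩
      have : I ≤ 𝔭 := hI𝔭
      calc I = (I.homogeneousCore 𝒜).toIdeal := hI.toIdeal_homogeneousCore_eq_self.symm
        _ ≤ (𝔭.homogeneousCore 𝒜).toIdeal := Ideal.homogeneousCore_mono 𝒜 this
    calc sInf {P : Ideal A | P.IsGPrime 𝒜 ∧ I ≤ P}
        = ((sInf {P : Ideal A | P.IsGPrime 𝒜 ∧ I ≤ P}).homogeneousCore 𝒜).toIdeal :=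
          hhom.toIdeal_homogeneousCore_eq_self.symm
      _ ≤ (I.radical.homogeneousCore 𝒜).toIdeal := Ideal.homogeneousCore_mono 𝒜 hle
  · apply le_sInf
    rintro P ⟨⟨𝔭, h𝔭, rfl⟩, hIP⟩
    have hI𝔭 : I ≤ 𝔭 := hIP.trans (𝔭.toIdeal_homogeneousCore_le 𝒜)
    have : I.radical ≤ 𝔭 := h𝔭.radical_le_iff.mpr hI𝔭
    exact Ideal.homogeneousCore_mono 𝒜 this
end

section
/- Let A be a noetherian commutative ring graded by an abelian group ι, and let I be a homogeneous ideal of A. Then the following are equivalent: (i) I is G-radical, i.e., I = 𝔞* for some radical ideal 𝔞 of A; (ii) there are finitely many G-prime homogeneous ideals P₁, …, P_r of A such that I = P₁ ∩ ⋯ ∩ P_r. -/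
/-- For a homogeneous ideal `I` of a noetherian graded ring `A`, the following are equivalent:
(i) `I` is `G`-radical, i.e. `I = 𝔞*` for some radical ideal `𝔞`;
(ii) `I` is a finite intersection of `G`-prime homogeneous ideals. -/
theorem Ideal.isGRadical_iff_finite_inter_gPrimes {ι : Type*} [AddCommGroup ι]
    [DecidableEq ι] {A : Type*} [CommRing A] [IsNoetherianRing A]
    (𝒜 : ι → AddSubgroup A) [GradedRing 𝒜] (I : Ideal A) (hI : I.IsHomogeneous 𝒜) :
    (∃ 𝔞 : Ideal A, 𝔞.radical = 𝔞 ∧ I = (𝔞.homogeneousCore 𝒜).toIdeal) ↔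
      (∃ (r : ℕ) (P : Fin r → Ideal A), (∀ i, (P i).IsGPrime 𝒜) ∧ I = ⨅ i, P i) := by
  constructor
  · rintro ⟨𝔞, hrad, rfl⟩
    have hfin : 𝔞.minimalPrimes.Finite := by
      rw [Ideal.minimalPrimes_eq_comap]
      exact ((minimalPrimes.finite_of_isNoetherianRing (A ⧸ 𝔞)).image _)
    have h𝔞 : 𝔞 = sInf 𝔞.minimalPrimes := by
      rw [Ideal.sInf_minimalPrimes, hrad]
    haveI := hfin.fintype
    refine ⟨Fintype.card 𝔞.minimalPrimes,
      fun i => (((Fintype.equivFin 𝔞.minimalPrimes).symm i : Ideal A).homogeneousCore 𝒜).toIdeal,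
      fun i => ⟨_, ((Fintype.equivFin 𝔞.minimalPrimes).symm i).2.1.1, rfl⟩, ?_⟩
    conv_lhs => rw [h𝔞, sInf_eq_iInf]
    rw [iInf_subtype']
    rw [(Ideal.homogeneousCore.gc 𝒜).u_iInf, HomogeneousIdeal.toIdeal_iInf]
    exact (Equiv.iInf_comp (g := fun p : 𝔞.minimalPrimes => ((p : Ideal A).homogeneousCore 𝒜).toIdeal)
      (Fintype.equivFin 𝔞.minimalPrimes).symm).symm
  · rintro ⟨r, P, hP, rfl⟩
    choose 𝔭 hprime hPeq using hP
    refine ⟨⨅ i, 𝔭 i, ?_, ?_⟩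
    · refine le_antisymm ?_ Ideal.le_radical
      intro x hx
      obtain ⟨n, hn⟩ := hx
      rw [Ideal.mem_iInf] at hn ⊢
      exact fun i => (hprime i).mem_of_pow_mem n (hn i)
    · rw [(Ideal.homogeneousCore.gc 𝒜).u_iInf, HomogeneousIdeal.toIdeal_iInf]
      exact iInf_congr hPeq
end

section
/- Let A be a noetherian commutative ring graded by an abelian group ι, and let Q be a G-primary homogeneous ideal of A. Then (√Q)*, the homogeneous core of the radical of Q, is a G-prime homogeneous ideal. -/
/-- A homogeneous ideal `Q` of a graded ring `A` is `G`-primary if `Q ≠ A` and for all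
homogeneous ideals `I`, `J` with `I·J ⊆ Q` and `J ⊄ Q`, one has `I ⊆ (√Q)*`. -/
def Ideal.IsGPrimary {ι : Type*} [AddCommGroup ι] [DecidableEq ι] {A : Type*} [CommRing A]
    (𝒜 : ι → AddSubgroup A) [GradedRing 𝒜] (Q : Ideal A) : Prop :=
  Q ≠ ⊤ ∧ ∀ I J : Ideal A, I.IsHomogeneous 𝒜 → J.IsHomogeneous 𝒜 →
    I * J ≤ Q → ¬ J ≤ Q → I ≤ (Q.radical.homogeneousCore 𝒜).toIdeal

/-- A homogeneous ideal contained in `J` is contained in the homogeneous core of `J`. -/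
lemma le_homogeneousCore_of_le {ι : Type*} [AddCommGroup ι] [DecidableEq ι] {A : Type*}
    [CommRing A] (𝒜 : ι → AddSubgroup A) [GradedRing 𝒜] {I J : Ideal A}
    (hI : I.IsHomogeneous 𝒜) (h : I ≤ J) : I ≤ (Ideal.homogeneousCore 𝒜 J).toIdeal := by
  have := Ideal.homogeneousCore_mono 𝒜 h
  rw [show I.homogeneousCore 𝒜 = ⟨I, hI⟩ from
    HomogeneousIdeal.toIdeal_injective (hI.toIdeal_homogeneousCore_eq_self)] at this
  exact this

lemma IsHomogeneous.pow' {ι : Type*} [AddCommGroup ι] [DecidableEq ι] {A : Type*}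
    [CommRing A] (𝒜 : ι → AddSubgroup A) [GradedRing 𝒜] {I : Ideal A}
    (hI : I.IsHomogeneous 𝒜) (n : ℕ) : (I ^ n).IsHomogeneous 𝒜 := by
  induction n with
  | zero =>
    rw [pow_zero, Ideal.one_eq_top]
    intro i r _
    exact Submodule.mem_top
  | succ n ih =>
    rw [pow_succ]
    exact ih.mul hI

/-- If `Q` is a `G`-primary homogeneous ideal of a noetherian graded ring, then its
`G`-radical `(√Q)*` is a `G`-prime homogeneous ideal. -/
theorem Ideal.IsGPrimary.gRadical_isGPrime {ι : Type*} [AddCommGroup ι] [DecidableEq ι]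
    {A : Type*} [CommRing A] [IsNoetherianRing A]
    (𝒜 : ι → AddSubgroup A) [GradedRing 𝒜] (Q : Ideal A) (hQhom : Q.IsHomogeneous 𝒜)
    (hQ : Q.IsGPrimary 𝒜) :
    ((Q.radical.homogeneousCore 𝒜).toIdeal).IsGPrime 𝒜 := by
  set P : Ideal A := (Q.radical.homogeneousCore 𝒜).toIdeal with hP
  have hPhom : P.IsHomogeneous 𝒜 := (Q.radical.homogeneousCore 𝒜).isHomogeneous
  have hPle : P ≤ Q.radical := Ideal.toIdeal_homogeneousCore_le 𝒜 _
  have hPtop : P ≠ ⊤ := by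
    intro h
    exact hQ.1 (Ideal.radical_eq_top.mp (top_le_iff.mp (h ▸ hPle)))
  -- `P` satisfies the G-prime condition on homogeneous ideals
  have key : ∀ I J : Ideal A, I.IsHomogeneous 𝒜 → J.IsHomogeneous 𝒜 →
      I * J ≤ P → I ≤ P ∨ J ≤ P := by
    intro I J hI hJ hIJ
    by_cases hJP : J ≤ P
    · exact Or.inr hJP
    left
    obtain ⟨n, hn⟩ := Ideal.exists_radical_pow_le_of_fg Q (IsNoetherian.noetherian _)
    have hn0 : n ≠ 0 := by
      rintro rfl
      exact hQ.1 (top_le_iff.mp (by simpa using hn))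
    have hJrad : ¬ J ≤ Q.radical := fun h => hJP (le_homogeneousCore_of_le 𝒜 hJ h)
    have hJnQ : ¬ J ^ n ≤ Q := by
      intro h
      exact hJrad <| le_trans (Ideal.le_radical) <|
        (Ideal.radical_pow (I := J) hn0) ▸ Ideal.radical_mono h
    have hprod : I ^ n * J ^ n ≤ Q := by
      rw [← mul_pow]
      calc (I * J) ^ n ≤ Q.radical ^ n := Ideal.pow_right_mono (le_trans hIJ hPle) n
        _ ≤ Q := hn
    have hIn : I ^ n ≤ P := hQ.2 (I ^ n) (J ^ n) (IsHomogeneous.pow' 𝒜 hI n) (IsHomogeneous.pow' 𝒜 hJ n) hprod hJnQ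
    have hIrad : I ≤ Q.radical := by
      have h1 : (I ^ n).radical ≤ Q.radical := by
        rw [← Ideal.radical_idem Q]
        exact Ideal.radical_mono (le_trans hIn hPle)
      rw [Ideal.radical_pow (I := I) hn0] at h1
      exact le_trans Ideal.le_radical h1
    exact le_homogeneousCore_of_le 𝒜 hI hIrad
  -- take an ideal maximal among those with homogeneous core equal to `P`
  have hSne : ({ I : Ideal A | (Ideal.homogeneousCore 𝒜 I).toIdeal = P } : Set (Ideal A)).Nonempty :=
    ⟨P, hPhom.toIdeal_homogeneousCore_eq_self⟩
  obtain ⟨𝔭, h𝔭mem, h𝔭max⟩ :=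
    set_has_maximal_iff_noetherian.mpr (inferInstance : IsNoetherianRing A) _ hSne
  refine ⟨𝔭, ?_, h𝔭mem.symm⟩
  constructor
  · rintro rfl
    apply hPtop
    rw [← h𝔭mem, Ideal.IsHomogeneous.toIdeal_homogeneousCore_eq_self]
    exact fun i r _ => Submodule.mem_top
  · intro a b hab
    by_contra hcon
    push_neg at hcon
    obtain ⟨ha, hb⟩ := hcon
    set I : Ideal A := 𝔭 ⊔ Ideal.span {a} with hI
    set J : Ideal A := 𝔭 ⊔ Ideal.span {b} with hJ
    have hIgt : 𝔭 < I := lt_of_le_of_ne le_sup_left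
      (fun h => ha (h ▸ le_sup_right (a := 𝔭) (Ideal.mem_span_singleton_self a)))
    have hJgt : 𝔭 < J := lt_of_le_of_ne le_sup_left
      (fun h => hb (h ▸ le_sup_right (a := 𝔭) (Ideal.mem_span_singleton_self b)))
    have hIJ : I * J ≤ 𝔭 := by
      rw [hI, hJ]
      rw [Ideal.mul_le]
      intro r hr s hs
      rcases Submodule.mem_sup.mp hr with ⟨r1, hr1, r2, hr2, rfl⟩
      rcases Submodule.mem_sup.mp hs with ⟨s1, hs1, s2, hs2, rfl⟩
      rcases Ideal.mem_span_singleton.mp hr2 with ⟨c, rfl⟩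
      rcases Ideal.mem_span_singleton.mp hs2 with ⟨d, rfl⟩
      have : (r1 + a * c) * (s1 + b * d)
          = r1 * (s1 + b * d) + s1 * (a * c) + (a * b) * (c * d) := by ring
      rw [this]
      exact add_mem (add_mem (Ideal.mul_mem_right _ _ hr1)
        (Ideal.mul_mem_right _ _ hs1)) (Ideal.mul_mem_right _ _ hab)
    have hcoreIJ : (Ideal.homogeneousCore 𝒜 I).toIdeal * (Ideal.homogeneousCore 𝒜 J).toIdeal ≤ P := by
      rw [← h𝔭mem]
      apply le_homogeneousCore_of_le 𝒜
        (Ideal.IsHomogeneous.mul (HomogeneousIdeal.isHomogeneous _)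
          (HomogeneousIdeal.isHomogeneous _))
      calc (Ideal.homogeneousCore 𝒜 I).toIdeal * (Ideal.homogeneousCore 𝒜 J).toIdeal
          ≤ I * J := Ideal.mul_mono (Ideal.toIdeal_homogeneousCore_le 𝒜 _)
            (Ideal.toIdeal_homogeneousCore_le 𝒜 _)
        _ ≤ 𝔭 := hIJ
    have hPleI : P ≤ (Ideal.homogeneousCore 𝒜 I).toIdeal := h𝔭mem ▸
      Ideal.homogeneousCore_mono 𝒜 hIgt.le
    have hPleJ : P ≤ (Ideal.homogeneousCore 𝒜 J).toIdeal := h𝔭mem ▸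
      Ideal.homogeneousCore_mono 𝒜 hJgt.le
    rcases key _ _ (HomogeneousIdeal.isHomogeneous _) (HomogeneousIdeal.isHomogeneous _)
        hcoreIJ with h | h
    · exact h𝔭max I (le_antisymm h hPleI) hIgt
    · exact h𝔭max J (le_antisymm h hPleJ) hJgt
end

section
/- Let ι be a finitely generated abelian group, A a noetherian commutative ring graded by ι, and I a homogeneous ideal of A. Then the set of G-associated G-primes of I, namely { I : J | J a homogeneous ideal of A such that the colon ideal I : J is G-prime }, equals { 𝔭* | 𝔭 an associated prime of the A-module A⧸I }. -/
/-!
A `G`-prime `P = 𝔮*` of the form `I : J` sits below the prime `𝔮`, so some minimal prime `𝔭`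
of `I : J` lies below `𝔮`; it is an associated prime of `A ⧸ I` because `I : J` is the
annihilator of the finite module `(J + I) / I`, and sandwiching `I : J ≤ 𝔭 ≤ 𝔮` gives
`𝔭* = I : J`. Conversely, if `𝔭 = I : x` is associated, then for `J` generated by the homogeneous
components of `x` the homogeneity of `I` gives `I : J = (I : x)* = 𝔭*`.
-/

namespace Submodule

variable {R M : Type*} [CommRing R] [AddCommGroup M] [Module R M]

theorem minimalPrimes_colon_subset_associatedPrimes [IsNoetherianRing R] {N P : Submodule R M}
    (hP : P.FG) : (N.colon (P : Set M)).minimalPrimes ⊆ associatedPrimes R (M ⧸ N) := by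
  have : Module.Finite R (P.map N.mkQ) := Module.Finite.iff_fg.mpr (hP.map _)
  rw [← annihilator_map_mkQ_eq_colon]
  exact (Module.associatedPrimes.minimalPrimes_annihilator_subset_associatedPrimes R _).trans
    (associatedPrimes.subset_of_injective (P.map N.mkQ).injective_subtype)

theorem bot_colon_singleton_mk (N : Submodule R M) (x : M) :
    (⊥ : Submodule R (M ⧸ N)).colon {Quotient.mk x} = N.colon {x} := by
  ext r
  simp [← Quotient.mk_smul, Quotient.mk_eq_zero]

end Submodule

open DirectSum

section Graded

variable {ι A σ : Type*} [DecidableEq ι] [AddCancelCommMonoid ι] [CommSemiring A] [SetLike σ A]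
  [AddSubmonoidClass σ A] {𝒜 : ι → σ} [GradedRing 𝒜]

theorem Ideal.mem_homogeneousCore_of_forall_decompose_mem {K : Ideal A} {a : A}
    (h : ∀ i, (decompose 𝒜 a i : A) ∈ K) : a ∈ K.homogeneousCore 𝒜 := by
  classical
  rw [← sum_support_decompose 𝒜 a]
  exact Ideal.sum_mem _ fun i _ ↦
    mem_homogeneousCore_of_homogeneous_of_mem ⟨i, SetLike.coe_mem _⟩ (h i)

theorem Ideal.toIdeal_homogeneousCore_eq_of_le_of_le {P 𝔭 𝔮 : Ideal A}
    (hP : P = (𝔮.homogeneousCore 𝒜).toIdeal) (hP𝔭 : P ≤ 𝔭) (h𝔭𝔮 : 𝔭 ≤ 𝔮) :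
    (𝔭.homogeneousCore 𝒜).toIdeal = P := by
  have hPhom : P.IsHomogeneous 𝒜 := hP ▸ (𝔮.homogeneousCore 𝒜).isHomogeneous
  refine le_antisymm ?_ ?_
  · exact hP ▸ homogeneousCore_mono 𝒜 h𝔭𝔮
  · exact hPhom.toIdeal_homogeneousCore_eq_self ▸ homogeneousCore_mono 𝒜 hP𝔭

variable {I : Ideal A}

theorem Ideal.IsHomogeneous.mul_mem_iff_forall_mul_decompose_mem (hI : I.IsHomogeneous 𝒜)
    {z : A} {d : ι} (hz : z ∈ 𝒜 d) (x : A) :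
    z * x ∈ I ↔ ∀ i, z * (decompose 𝒜 x i : A) ∈ I := by
  refine ⟨fun h i ↦ ?_, fun h ↦ ?_⟩
  · rw [← coe_decompose_mul_add_of_left_mem 𝒜 hz]
    exact hI _ h
  · classical
    rw [← sum_support_decompose 𝒜 x, Finset.mul_sum]
    exact Ideal.sum_mem _ fun i _ ↦ h i

theorem Ideal.IsHomogeneous.colon_range_decompose (hI : I.IsHomogeneous 𝒜) (x : A) :
    I.colon (Set.range fun i ↦ (decompose 𝒜 x i : A))
      = ((I.colon {x}).homogeneousCore 𝒜).toIdeal := by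
  refine le_antisymm (fun a ha ↦ ?_) (span_le.mpr ?_)
  · refine mem_homogeneousCore_of_forall_decompose_mem fun d ↦ ?_
    rw [Submodule.mem_colon_singleton, smul_eq_mul,
      hI.mul_mem_iff_forall_mul_decompose_mem (SetLike.coe_mem _)]
    intro i
    -- `a_d * x_i` is the `(d + i)`-component of `a * x_i ∈ I`
    rw [← coe_decompose_mul_add_of_right_mem 𝒜 (SetLike.coe_mem _)]
    exact hI _ (Submodule.mem_colon.mp ha _ ⟨i, rfl⟩)
  · rintro _ ⟨⟨z, d, hz⟩, hzx, rfl⟩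
    rw [SetLike.mem_coe, Submodule.mem_colon, Set.forall_mem_range]
    exact (hI.mul_mem_iff_forall_mul_decompose_mem hz x).mp
      (Submodule.mem_colon_singleton.mp hzx)

end Graded

theorem gAssociated_eq_homogeneousCore_associatedPrimes_general
    {ι : Type*} [AddCommGroup ι] [DecidableEq ι]
    {A : Type*} [CommRing A] [IsNoetherianRing A]
    (𝒜 : ι → AddSubgroup A) [GradedRing 𝒜] (I : Ideal A) (hI : I.IsHomogeneous 𝒜) :
    {P : Ideal A | ∃ J : Ideal A, J.IsHomogeneous 𝒜 ∧
        (Submodule.colon I J).IsGPrime 𝒜 ∧ P = Submodule.colon I J}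
      = {P : Ideal A | ∃ 𝔭 ∈ associatedPrimes A (A ⧸ I),
          P = (Ideal.homogeneousCore 𝒜 𝔭).toIdeal} := by
  ext P
  constructor
  · rintro ⟨J, -, ⟨𝔮, h𝔮, hcolon⟩, rfl⟩
    obtain ⟨𝔭, h𝔭min, h𝔭𝔮⟩ :=
      Ideal.exists_minimalPrimes_le (hcolon ▸ Ideal.toIdeal_homogeneousCore_le 𝒜 𝔮)
    exact ⟨𝔭, Submodule.minimalPrimes_colon_subset_associatedPrimes (IsNoetherian.noetherian J)
      h𝔭min, (Ideal.toIdeal_homogeneousCore_eq_of_le_of_le hcolon h𝔭min.1.2 h𝔭𝔮).symm⟩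
  · rintro ⟨𝔭, h𝔭, rfl⟩
    obtain ⟨h𝔭prime, y, rfl⟩ := isAssociatedPrime_iff.mp h𝔭
    obtain ⟨x, rfl⟩ := Submodule.Quotient.mk_surjective I y
    set J := Ideal.span (Set.range fun i ↦ (decompose 𝒜 x i : A))
    have hJ : J.IsHomogeneous 𝒜 :=
      Ideal.homogeneous_span 𝒜 _ (Set.forall_mem_range.mpr fun i ↦ ⟨i, SetLike.coe_mem _⟩)
    have hcolon : I.colon J = ((I.colon {x}).homogeneousCore 𝒜).toIdeal := by
      rw [Ideal.colon_span, hI.colon_range_decompose]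
    rw [Submodule.bot_colon_singleton_mk] at h𝔭prime ⊢
    exact ⟨J, hJ, ⟨_, h𝔭prime, hcolon⟩, hcolon.symm⟩

/-- Let `ι` be a finitely generated abelian group, `A` a noetherian commutative ring graded by
`ι`, and `I` a homogeneous ideal of `A`.  Then the set of `G`-associated `G`-primes of `I`,
namely the ideals of the form `I : J` with `J` homogeneous and `I : J` `G`-prime, equals the
set `{𝔭* | 𝔭 an associated prime of A ⧸ I}`. -/
theorem gAssociated_eq_homogeneousCore_associatedPrimes
    {ι : Type*} [AddCommGroup ι] [AddGroup.FG ι] [DecidableEq ι]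
    {A : Type*} [CommRing A] [IsNoetherianRing A]
    (𝒜 : ι → AddSubgroup A) [GradedRing 𝒜] (I : Ideal A) (hI : I.IsHomogeneous 𝒜) :
    {P : Ideal A | ∃ J : Ideal A, J.IsHomogeneous 𝒜 ∧
        (Submodule.colon I J).IsGPrime 𝒜 ∧ P = Submodule.colon I J}
      = {P : Ideal A | ∃ 𝔭 ∈ associatedPrimes A (A ⧸ I),
          P = (Ideal.homogeneousCore 𝒜 𝔭).toIdeal} :=
  gAssociated_eq_homogeneousCore_associatedPrimes_general 𝒜 I hI
end

section
/- Let ι be a finitely generated abelian group, A a noetherian commutative ring graded by ι, and 𝔭 a prime ideal of A. Then 𝔭 is an associated prime of the A-module A⧸I for some homogeneous ideal I of A if and only if 𝔭 is a minimal prime over its homogeneous core 𝔭*. -/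
/-!
Write `𝔭 = (I : a)` with `I` homogeneous and embed `ι` into `ℤⁿ × T` with `T` finite. Coarsening
the grading along `ι → ℤⁿ`, with `ℤⁿ` ordered lexicographically, gives a grading by a totally
ordered group, and for those the leading-term argument shows that `𝔭` is homogeneous. The degree
zero part `R` of the coarsening along `ι → T` is a subring over which `A` is integral, since every
homogeneous element has a power in `R`. An element of `𝔭 ∩ R` has `ℤⁿ`-components in `𝔭` which are
`ι`-homogeneous, so `𝔭 ∩ R ⊆ 𝔭*`, and incomparability for the integral extension `R ⊆ A` makes
`𝔭` minimal over `𝔭*`. Conversely, a minimal prime of `𝔭*` is an associated prime of `A ⧸ 𝔭*`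
because `A` is noetherian.
-/

open DirectSum SetLike

namespace DirectSum

section Coarsen

variable {ι L M σ : Type*} [DecidableEq ι] [AddCommGroup M] [SetLike σ M] [AddSubgroupClass σ M]
  (𝒜 : ι → σ) [Decomposition 𝒜] (φ : ι → L)

def coarsen (l : L) : AddSubgroup M where
  carrier := {x | ∀ i, φ i ≠ l → (decompose 𝒜 x i : M) = 0}
  add_mem' hx hy i hi := by simp [hx i hi, hy i hi]
  zero_mem' i _ := by simp
  neg_mem' hx i hi := by
    rw [decompose_neg, DFinsupp.neg_apply, NegMemClass.coe_neg, hx i hi, neg_zero]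

variable {𝒜 φ}

theorem coe_decompose_sum_apply_of_notMem_image {κ : Type*} {S : Finset κ} {g : κ → ι}
    {c : κ → M} (hc : ∀ j ∈ S, c j ∈ 𝒜 (g j)) {k : ι} (hk : k ∉ S.image g) :
    (decompose 𝒜 (∑ j ∈ S, c j) k : M) = 0 := by
  rw [decompose_sum, DFinsupp.finsetSum_apply, AddSubmonoidClass.coe_finsetSum]
  exact Finset.sum_eq_zero fun j hj =>
    decompose_of_mem_ne 𝒜 (hc j hj) fun h => hk (Finset.mem_image.2 ⟨j, hj, h⟩)

theorem mem_coarsen_of_mem {x : M} {i : ι} (hx : x ∈ 𝒜 i) : x ∈ coarsen 𝒜 φ (φ i) :=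
  fun _ hj => decompose_of_mem_ne 𝒜 hx fun h => hj (congrArg φ h).symm

theorem isHomogeneousElem_coarsen {x : M} (hx : IsHomogeneousElem 𝒜 x) :
    IsHomogeneousElem (coarsen 𝒜 φ) x :=
  let ⟨_, hi⟩ := hx
  ⟨_, mem_coarsen_of_mem hi⟩

theorem mem_coarsen_prod {T : Type*} {ψ : ι → T} {x : M} {l : L} {t : T}
    (hφ : x ∈ coarsen 𝒜 φ l) (hψ : x ∈ coarsen 𝒜 ψ t) :
    x ∈ coarsen 𝒜 (Function.prod φ ψ) (l, t) := by
  intro i hi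
  by_cases hl : φ i = l
  · exact hψ i fun ht => hi (Prod.ext hl ht)
  · exact hφ i hl

theorem isHomogeneousElem_of_mem_coarsen [Nonempty ι] (hφ : Function.Injective φ) {x : M}
    {l : L} (hx : x ∈ coarsen 𝒜 φ l) : IsHomogeneousElem 𝒜 x := by
  classical
  by_cases hl : ∃ i, φ i = l
  · obtain ⟨i, rfl⟩ := hl
    refine ⟨i, ?_⟩
    rw [← sum_support_decompose 𝒜 x, Finset.sum_eq_single i
      (fun j _ hji => hx j fun h => hji (hφ h)) (fun hi => by simpa using hi)]
    exact coe_mem _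
  · push Not at hl
    obtain ⟨i⟩ := ‹Nonempty ι›
    refine ⟨i, ?_⟩
    rw [← sum_support_decompose 𝒜 x, Finset.sum_eq_zero fun j _ => hx j (hl j)]
    exact zero_mem _

variable (𝒜 φ) [DecidableEq L]

def decomposeCoarsen : M →+ ⨁ l, coarsen 𝒜 φ l :=
  (toAddMonoid fun i => (of (fun l => coarsen 𝒜 φ l) (φ i)).comp
    ((AddSubmonoidClass.subtype (𝒜 i)).codRestrict _ fun x => mem_coarsen_of_mem x.2)).comp
    (decomposeAddEquiv 𝒜).toAddMonoidHom

variable {𝒜 φ}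

theorem decomposeCoarsen_of_mem {x : M} {i : ι} (hx : x ∈ 𝒜 i) :
    decomposeCoarsen 𝒜 φ x = of (fun l => coarsen 𝒜 φ l) (φ i) ⟨x, mem_coarsen_of_mem hx⟩ := by
  simp [decomposeCoarsen, decomposeAddEquiv, decompose_of_mem 𝒜 hx]

theorem decompose_coe_decomposeCoarsen_apply (x : M) (l : L) (i : ι) :
    (decompose 𝒜 (decomposeCoarsen 𝒜 φ x l : M) i : M) =
      if φ i = l then (decompose 𝒜 x i : M) else 0 := by
  induction x using Decomposition.inductionOn 𝒜 with
  | zero => simp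
  | @homogeneous j x =>
    rw [decomposeCoarsen_of_mem x.2, coe_of_apply]
    split_ifs with hj hi hi <;>
      simp only [decompose_coe, decompose_zero, zero_apply, coe_of_apply, ZeroMemClass.coe_zero]
    all_goals rw [if_neg (by rintro rfl; contradiction), ZeroMemClass.coe_zero]
  | add x y hx hy =>
    simp only [map_add, DirectSum.add_apply, AddMemClass.coe_add, decompose_add, hx, hy]
    split_ifs <;> simp

instance : Decomposition (coarsen 𝒜 φ) where
  decompose' := decomposeCoarsen 𝒜 φ
  left_inv x := by
    induction x using Decomposition.inductionOn 𝒜 with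
    | zero => simp
    | homogeneous x => rw [decomposeCoarsen_of_mem x.2, coeAddMonoidHom_of]
    | add x y hx hy => rw [map_add, map_add, hx, hy]
  right_inv y := by
    induction y using DirectSum.induction_on with
    | zero => simp
    | of l x =>
      rw [coeAddMonoidHom_of]
      ext l' : 1
      apply Subtype.ext
      apply (decompose 𝒜).injective
      ext i : 1
      apply Subtype.ext
      rw [decompose_coe_decomposeCoarsen_apply, coe_of_apply]
      split_ifs with hi hl hl
      · rfl
      · rw [ZeroMemClass.coe_zero, decompose_zero, zero_apply, ZeroMemClass.coe_zero]
        exact x.2 i fun h => hl (h.symm.trans hi)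
      · exact (x.2 i fun h => hi (h.trans hl)).symm
      · rw [ZeroMemClass.coe_zero, decompose_zero, zero_apply, ZeroMemClass.coe_zero]
    | add x y hx hy => rw [map_add, map_add, hx, hy]

theorem decompose_coe_decompose_coarsen_apply (x : M) (l : L) (i : ι) :
    (decompose 𝒜 (decompose (coarsen 𝒜 φ) x l : M) i : M) =
      if φ i = l then (decompose 𝒜 x i : M) else 0 :=
  decompose_coe_decomposeCoarsen_apply x l i

theorem coe_decompose_coarsen_mem_coarsen {T : Type*} {ψ : ι → T} {x : M} {t : T}
    (hx : x ∈ coarsen 𝒜 ψ t) (l : L) : (decompose (coarsen 𝒜 φ) x l : M) ∈ coarsen 𝒜 ψ t := by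
  intro i hi
  rw [decompose_coe_decompose_coarsen_apply]
  split_ifs
  exacts [hx i hi, rfl]

end Coarsen

section GradedRing

variable {ι L A σ : Type*} [DecidableEq ι] [AddMonoid ι] [DecidableEq L] [AddMonoid L]
  [Ring A] [SetLike σ A] [AddSubgroupClass σ A] (𝒜 : ι → σ) [GradedRing 𝒜] (φ : ι →+ L)

instance : SetLike.GradedMonoid (coarsen 𝒜 φ) where
  one_mem := by simpa using mem_coarsen_of_mem (φ := φ) (SetLike.one_mem_graded 𝒜)
  mul_mem {l₁ l₂ x y} hx hy i hi := by
    classical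
    rw [decompose_mul, coe_mul_apply]
    refine Finset.sum_eq_zero fun ⟨a, b⟩ hab => ?_
    obtain rfl : a + b = i := (Finset.mem_filter.mp hab).2
    by_cases ha : φ a = l₁
    · rw [hy b fun hb => hi (by rw [map_add, ha, hb]), mul_zero]
    · rw [hx a ha, zero_mul]

instance : GradedRing (coarsen 𝒜 φ) where

variable {𝒜}

theorem _root_.Ideal.IsHomogeneous.coarsen {I : Ideal A} (hI : I.IsHomogeneous 𝒜) :
    I.IsHomogeneous (coarsen 𝒜 φ) := by
  rw [← hI.toIdeal_homogeneousCore_eq_self]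
  exact Ideal.homogeneous_span _ _ fun _ ⟨y, _, hy⟩ => hy ▸ isHomogeneousElem_coarsen y.2

end GradedRing

end DirectSum

open DirectSum

theorem GradedRing.isIntegral_of_isAddTorsion {ι A σ : Type*} [DecidableEq ι] [AddCommMonoid ι]
    [CommRing A] [SetLike σ A] [AddSubgroupClass σ A] (𝒜 : ι → σ) [GradedRing 𝒜]
    (hι : IsAddTorsion ι) : Algebra.IsIntegral (𝒜 0) A := by
  constructor
  intro x
  induction x using Decomposition.inductionOn 𝒜 with
  | zero => exact isIntegral_zero
  | @homogeneous i x =>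
    obtain ⟨n, hn, hni⟩ := (hι i).exists_nsmul_eq_zero
    have hpow : (x : A) ^ n ∈ 𝒜 0 := hni ▸ SetLike.pow_mem_graded n x.2
    exact IsIntegral.of_pow hn (isIntegral_algebraMap (x := (⟨_, hpow⟩ : 𝒜 0)))
  | add x y hx hy => exact hx.add hy

theorem Ideal.IsPrime.mem_minimalPrimes_homogeneousCore {ι L T A σ : Type*} [DecidableEq ι]
    [AddCommMonoid ι] [DecidableEq L] [AddMonoid L] [DecidableEq T] [AddCommMonoid T]
    [CommRing A] [SetLike σ A] [AddSubgroupClass σ A] {𝒜 : ι → σ} [GradedRing 𝒜] {p : Ideal A}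
    (hp : p.IsPrime) (φ : ι →+ L) (ψ : ι →+ T) (hT : IsAddTorsion T)
    (hφψ : Function.Injective (Function.prod φ ψ)) (hpφ : p.IsHomogeneous (coarsen 𝒜 φ)) :
    p ∈ (p.homogeneousCore 𝒜).toIdeal.minimalPrimes := by
  have := GradedRing.isIntegral_of_isAddTorsion (coarsen 𝒜 ψ) hT
  have hmin := Ideal.IsIntegral.mem_minimalPrimes_map_under (R := coarsen 𝒜 ψ 0) p
  refine ⟨⟨hp, p.toIdeal_homogeneousCore_le 𝒜⟩,
    fun q hq hqp => hmin.2 ⟨hq.1, le_trans ?_ hq.2⟩ hqp⟩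
  rw [Ideal.map_le_iff_le_comap]
  intro y hy
  classical
  rw [Ideal.mem_comap, ← sum_support_decompose (coarsen 𝒜 φ) (algebraMap _ A y)]
  refine Ideal.sum_mem _ fun l _ => Ideal.mem_homogeneousCore_of_homogeneous_of_mem ?_ (hpφ l hy)
  exact isHomogeneousElem_of_mem_coarsen hφψ
    (mem_coarsen_prod (coe_mem _) (coe_decompose_coarsen_mem_coarsen y.2 l))

section LinearOrder

variable {ι A σ : Type*} [DecidableEq ι] [AddMonoid ι] [LinearOrder ι] [Ring A] [SetLike σ A]
  [AddSubgroupClass σ A] {𝒜 : ι → σ} [GradedRing 𝒜]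

theorem Ideal.IsHomogeneous.of_forall_top_component_mem {J : Ideal A}
    (h : ∀ x ∈ J, ∀ t, (∀ i, t < i → (decompose 𝒜 x i : A) = 0) → (decompose 𝒜 x t : A) ∈ J) :
    J.IsHomogeneous 𝒜 := by
  classical
  intro i x hx
  induction hn : (decompose 𝒜 x).support.card generalizing x with
  | zero =>
    rw [Finset.card_eq_zero, DFinsupp.support_eq_empty] at hn
    rw [hn, DirectSum.zero_apply, ZeroMemClass.coe_zero]
    exact J.zero_mem
  | succ n ih =>
    have hne : (decompose 𝒜 x).support.Nonempty := by rw [← Finset.card_pos, hn]; omega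
    set t := (decompose 𝒜 x).support.max' hne
    have ht : (decompose 𝒜 x t : A) ∈ J := h x hx t fun j hj => by
      by_contra hj'
      exact not_le.2 hj (Finset.le_max' _ j (by simpa using hj'))
    have herase : decompose 𝒜 (x - decompose 𝒜 x t) = (decompose 𝒜 x).erase t := by
      rw [decompose_sub, decompose_coe, DFinsupp.erase_eq_sub_single]
      rfl
    have hsplit : (decompose 𝒜 x i : A) =
        decompose 𝒜 (x - decompose 𝒜 x t) i + decompose 𝒜 (decompose 𝒜 x t : A) i := by
      rw [← AddMemClass.coe_add, ← DirectSum.add_apply, ← decompose_add, sub_add_cancel]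
    rw [hsplit]
    refine J.add_mem (ih (J.sub_mem hx ht) ?_) ?_
    · rw [herase, DFinsupp.support_erase, Finset.card_erase_of_mem (Finset.max'_mem _ _), hn]
      rfl
    · rw [decompose_coe, coe_of_apply]
      split_ifs
      exacts [ht, J.zero_mem]

end LinearOrder

section OrderedCancelAddMonoid

variable {ι A σ : Type*} [DecidableEq ι] [AddCommMonoid ι] [LinearOrder ι]
  [IsOrderedCancelAddMonoid ι] [CommRing A] [SetLike σ A] [AddSubgroupClass σ A] {𝒜 : ι → σ}
  [GradedRing 𝒜]

theorem coe_decompose_mul_add_of_forall_lt {x y : A} {t s : ι}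
    (hx : ∀ i, t < i → (decompose 𝒜 x i : A) = 0) (hy : ∀ j, s < j → (decompose 𝒜 y j : A) = 0) :
    (decompose 𝒜 (x * y) (t + s) : A) = decompose 𝒜 x t * decompose 𝒜 y s := by
  classical
  have hle : ∀ i j, decompose 𝒜 x i ≠ 0 → decompose 𝒜 y j ≠ 0 → i + j = t + s →
      i = t ∧ j = s := by
    intro i j hi hj hij
    have hit : i ≤ t := not_lt.1 fun h => hi (ZeroMemClass.coe_eq_zero.1 (hx i h))
    have hjs : j ≤ s := not_lt.1 fun h => hj (ZeroMemClass.coe_eq_zero.1 (hy j h))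
    obtain hit | rfl := hit.lt_or_eq
    · exact absurd hij (add_lt_add_of_lt_of_le hit hjs).ne
    · exact ⟨rfl, add_left_cancel hij⟩
  rw [decompose_mul, coe_mul_apply, Finset.sum_eq_single (t, s)]
  · rintro ⟨i, j⟩ hij hne
    simp only [Finset.mem_filter, Finset.mem_product, DFinsupp.mem_support_iff] at hij
    exact absurd (Prod.ext_iff.2 (hle i j hij.1.1 hij.1.2 hij.2)) hne
  · intro hts
    simp only [Finset.mem_filter, Finset.mem_product, DFinsupp.mem_support_iff, and_true,
      not_and_or, not_not] at hts
    obtain h | h := hts <;> simp [h]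

theorem Ideal.IsHomogeneous.exists_colon_eq_of_top_component_notMem
    [∀ i (x : 𝒜 i), Decidable (x ≠ 0)] {I : Ideal A} (hI : I.IsHomogeneous 𝒜) {a x : A}
    (hp : (I.colon {a}).IsPrime) (hx : x ∈ I.colon {a}) {t : ι}
    (ht : ∀ i, t < i → (decompose 𝒜 x i : A) = 0) (hxt : (decompose 𝒜 x t : A) ∉ I.colon {a}) :
    ∃ a', I.colon {a'} = I.colon {a} ∧
      (decompose 𝒜 a').support.card < (decompose 𝒜 a).support.card := by
  have hne : (decompose 𝒜 a).support.Nonempty := by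
    rw [Finset.nonempty_iff_ne_empty, Ne, DFinsupp.support_eq_empty]
    intro h
    apply hp.ne_top
    rw [Submodule.colon_eq_top_iff_subset, Set.singleton_subset_iff, SetLike.mem_coe,
      ← (decompose 𝒜).symm_apply_apply a, h, decompose_symm_zero]
    exact I.zero_mem
  set s := (decompose 𝒜 a).support.max' hne
  have hs : ∀ j, s < j → (decompose 𝒜 a j : A) = 0 := fun j hj => by
    by_contra h
    exact not_le.2 hj (Finset.le_max' _ j (by simpa using h))
  set xt := (decompose 𝒜 x t : A)
  have hxta : xt * decompose 𝒜 a s ∈ I := by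
    rw [← coe_decompose_mul_add_of_forall_lt ht hs]
    exact hI _ (Submodule.mem_colon_singleton.1 hx)
  refine ⟨xt * (a - decompose 𝒜 a s), ?_, ?_⟩
  · ext r
    calc r ∈ I.colon {xt * (a - decompose 𝒜 a s)} ↔ r * xt * a ∈ I := by
          rw [Submodule.mem_colon_singleton, smul_eq_mul,
            show r * (xt * (a - decompose 𝒜 a s)) = r * xt * a - r * (xt * decompose 𝒜 a s) by
              ring,
            I.sub_mem_iff_left (I.mul_mem_left r hxta)]
      _ ↔ r * xt ∈ I.colon {a} := by rw [Submodule.mem_colon_singleton, smul_eq_mul]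
      _ ↔ r ∈ I.colon {a} := by rw [hp.mul_mem_iff_mem_or_mem, or_iff_left hxt]
  have hrest : a - decompose 𝒜 a s = ∑ j ∈ (decompose 𝒜 a).support.erase s, decompose 𝒜 a j := by
    rw [sub_eq_iff_eq_add', Finset.add_sum_erase _ (fun j => (decompose 𝒜 a j : A))
      (Finset.max'_mem _ hne), sum_support_decompose]
  have hsupp : (decompose 𝒜 (xt * (a - decompose 𝒜 a s))).support ⊆
      ((decompose 𝒜 a).support.erase s).image (t + ·) := by
    intro k hk
    by_contra hk'
    refine DFinsupp.mem_support_iff.1 hk (ZeroMemClass.coe_eq_zero.1 ?_)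
    rw [hrest, Finset.mul_sum]
    exact coe_decompose_sum_apply_of_notMem_image
      (fun j _ => SetLike.mul_mem_graded (coe_mem _) (coe_mem _)) hk'
  calc _ ≤ _ := Finset.card_le_card hsupp
    _ ≤ _ := Finset.card_image_le
    _ < _ := Finset.card_erase_lt_of_mem (Finset.max'_mem _ hne)

theorem Ideal.IsHomogeneous.colon_singleton_of_isPrime {I : Ideal A} (hI : I.IsHomogeneous 𝒜)
    {a : A} (hp : (I.colon {a}).IsPrime) : (I.colon {a}).IsHomogeneous 𝒜 := by
  classical
  induction hn : (decompose 𝒜 a).support.card using Nat.strong_induction_on generalizing a with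
  | _ n ih =>
  refine Ideal.IsHomogeneous.of_forall_top_component_mem fun x hx t ht => ?_
  by_contra hxt
  obtain ⟨a', hcolon, hcard⟩ := hI.exists_colon_eq_of_top_component_notMem hp hx ht hxt
  have hhom := ih _ (hn ▸ hcard) (hcolon ▸ hp) rfl
  rw [hcolon] at hhom
  exact hxt (hhom t hx)

end OrderedCancelAddMonoid

theorem Ideal.bot_colon_singleton_mk {A : Type*} [CommRing A] (I : Ideal A) (a : A) :
    (⊥ : Submodule A (A ⧸ I)).colon {Ideal.Quotient.mk I a} = I.colon {a} := by
  ext r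
  rw [Submodule.mem_colon_singleton, Submodule.mem_colon_singleton, Submodule.mem_bot,
    Algebra.smul_def, Ideal.Quotient.algebraMap_eq, ← map_mul, Ideal.Quotient.eq_zero_iff_mem,
    smul_eq_mul]

theorem AddCommGroup.exists_injective_lex_free_prod_torsion (ι : Type*) [AddCommGroup ι]
    [AddGroup.FG ι] :
    ∃ (n : ℕ) (T : Type) (_ : AddCommGroup T) (φ : ι →+ Lex (Fin n →₀ ℤ)) (ψ : ι →+ T),
      IsAddTorsion T ∧ Function.Injective (Function.prod φ ψ) := by
  obtain ⟨n, κ, _, p, hp, e, ⟨f⟩⟩ := AddCommGroup.equiv_free_prod_directSum_zmod ι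
  have (i : κ) : NeZero (p i ^ e i) := ⟨pow_ne_zero _ (hp i).ne_zero⟩
  have : Finite (⨁ i, ZMod (p i ^ e i)) := Finite.of_equiv _ DFinsupp.equivFunOnFintype.symm
  refine ⟨n, _, inferInstance,
    (toLexAddEquiv _).toAddMonoidHom.comp ((AddMonoidHom.fst _ _).comp f.toAddMonoidHom),
    (AddMonoidHom.snd _ _).comp f.toAddMonoidHom, isOfFinAddOrder_of_finite,
    fun x y h => f.injective ?_⟩
  exact Prod.ext (toLex.injective (congrArg Prod.fst h)) (congrArg Prod.snd h)

/-- Let `ι` be a finitely generated abelian group, `A` a noetherian commutative ring graded by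
`ι`, and `𝔭` a prime ideal of `A`.  Then `𝔭` is an associated prime of `A ⧸ I` for some
homogeneous ideal `I` if and only if `𝔭` is a minimal prime over its homogeneous core `𝔭*`. -/
theorem isAssociatedPrime_of_homogeneous_iff_minimal_over_homogeneousCore
    {ι : Type*} [AddCommGroup ι] [AddGroup.FG ι] [DecidableEq ι]
    {A : Type*} [CommRing A] [IsNoetherianRing A]
    (𝒜 : ι → AddSubgroup A) [GradedRing 𝒜] (𝔭 : Ideal A) (h𝔭 : 𝔭.IsPrime) :
    (∃ I : Ideal A, I.IsHomogeneous 𝒜 ∧ 𝔭 ∈ associatedPrimes A (A ⧸ I))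
      ↔ 𝔭 ∈ ((𝔭.homogeneousCore 𝒜).toIdeal).minimalPrimes := by
  constructor
  · rintro ⟨I, hI, hass⟩
    obtain ⟨-, a, rfl⟩ := isAssociatedPrime_iff.mp hass
    obtain ⟨a, rfl⟩ := Ideal.Quotient.mk_surjective a
    rw [Ideal.bot_colon_singleton_mk] at h𝔭 ⊢
    obtain ⟨n, T, _, φ, ψ, hT, hφψ⟩ := AddCommGroup.exists_injective_lex_free_prod_torsion ι
    classical
    exact h𝔭.mem_minimalPrimes_homogeneousCore φ ψ hT hφψ
      ((hI.coarsen φ).colon_singleton_of_isPrime h𝔭)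
  · intro hmin
    refine ⟨_, (𝔭.homogeneousCore 𝒜).isHomogeneous, ?_⟩
    apply Module.associatedPrimes.minimalPrimes_annihilator_subset_associatedPrimes
    rwa [Ideal.annihilator_quotient]
end

section
/- Let n be a natural number and A a noetherian commutative ring graded by ℤⁿ (i.e., by ι = Fin n → ℤ). Then: (i) for every prime ideal 𝔭 of A, the homogeneous core 𝔭* is a prime ideal; and (ii) for every homogeneous ideal I of A, every associated prime of the A-module A⧸I is a homogeneous ideal. -/
/-!
Order `ℤⁿ` lexicographically; this is a linear order compatible with addition, which is all
Mathlib's `Ideal.IsPrime.homogeneousCore` needs for (i).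

For (ii), let `I` be homogeneous and `𝔭 = (I : y)` prime; induct on the number of degrees in which
`y` is nonzero modulo `I`, and let `j` be the lowest one. If a homogeneous `h ∉ 𝔭` has
`h y_j ∈ I`, then `𝔭 = (I : h y)` and `h y` has fewer such degrees. Otherwise, take `a ∈ 𝔭` and
its lowest component `a_i ∉ 𝔭`: all lower products in the degree `i + j` part of `a y ∈ I` lie
in `I`, so `a_i y_j ∈ I` and hence `a_i ∈ 𝔭`, a contradiction.
-/

open DirectSum Finset Submodule

theorem lt_or_lt_of_add_eq_add_of_ne {ι : Type*} [AddCommMonoid ι] [LinearOrder ι]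
    [IsOrderedCancelAddMonoid ι] {i j i' j' : ι} (h : i' + j' = i + j) (hne : (i', j') ≠ (i, j)) :
    i' < i ∨ j' < j := by
  by_contra! ⟨hi, hj⟩
  obtain ⟨rfl, rfl⟩ := (add_eq_add_iff_eq_and_eq hi hj).1 h.symm
  exact hne rfl

namespace Ideal

theorem colon_singleton_mul_of_notMem {R : Type*} [CommSemiring R] {I : Ideal R} {y h : R}
    (hp : (I.colon {y}).IsPrime) (hh : h ∉ I.colon {y}) : I.colon {h * y} = I.colon {y} := by
  ext c
  have key : c * h ∈ I.colon {y} ↔ c ∈ I.colon {y} :=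
    ⟨fun hc => (hp.mem_or_mem hc).resolve_right hh, fun hc => mul_mem_right h _ hc⟩
  simpa only [mem_colon_singleton, smul_eq_mul, mul_assoc] using key

variable {ι σ A : Type*} [CommRing A] [SetLike σ A] [AddSubmonoidClass σ A] {𝒜 : ι → σ}
  {I : Ideal A}

section Cancel

variable [DecidableEq ι] [AddCancelCommMonoid ι] [GradedRing 𝒜]

variable (𝒜 I) in
open Classical in
/-- For homogeneous `I`, the support of the image of `y` in the graded module `A ⧸ I`. -/
noncomputable def quotSupport (y : A) : Finset ι :=
  {j ∈ (decompose 𝒜 y).support | (decompose 𝒜 y j : A) ∉ I}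

theorem mem_quotSupport {y : A} {j : ι} :
    j ∈ quotSupport 𝒜 I y ↔ (decompose 𝒜 y j : A) ∉ I := by
  classical
  simp only [quotSupport, mem_filter, DFinsupp.mem_support_iff, and_iff_right_iff_imp]
  intro hj h0
  exact hj (by simp [h0])

theorem IsHomogeneous.mul_coe_decompose_mem (hI : I.IsHomogeneous 𝒜) {h y : A} {d : ι}
    (hh : h ∈ 𝒜 d) (hhy : h * y ∈ I) (j : ι) : h * (decompose 𝒜 y j : A) ∈ I := by
  rw [← coe_decompose_mul_add_of_left_mem 𝒜 hh]
  exact hI _ hhy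

theorem IsHomogeneous.coe_decompose_mul_mem (hI : I.IsHomogeneous 𝒜) {x h : A} {d : ι}
    (hh : h ∈ 𝒜 d) (hxh : x * h ∈ I) (i : ι) : (decompose 𝒜 x i : A) * h ∈ I := by
  rw [← coe_decompose_mul_add_of_right_mem 𝒜 hh]
  exact hI _ hxh

end Cancel

theorem card_quotSupport_mul_lt [DecidableEq ι] [AddCommGroup ι] [GradedRing 𝒜] {h y : A}
    {d j : ι} (hh : h ∈ 𝒜 d) (hj : j ∈ quotSupport 𝒜 I y) (hhj : h * decompose 𝒜 y j ∈ I) :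
    (quotSupport 𝒜 I (h * y)).card < (quotSupport 𝒜 I y).card := by
  have hsub : quotSupport 𝒜 I (h * y) ⊆ ((quotSupport 𝒜 I y).erase j).image (d + ·) := by
    intro k hk
    rw [mem_quotSupport, ← add_sub_cancel d k, coe_decompose_mul_add_of_left_mem 𝒜 hh] at hk
    refine mem_image.2 ⟨k - d, mem_erase.2 ⟨?_, mem_quotSupport.2 ?_⟩, add_sub_cancel d k⟩
    · rintro rfl
      exact hk hhj
    · exact fun hmem => hk (I.mul_mem_left h hmem)
  calc _ ≤ (((quotSupport 𝒜 I y).erase j).image (d + ·)).card := card_le_card hsub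
    _ ≤ ((quotSupport 𝒜 I y).erase j).card := card_image_le
    _ < _ := card_erase_lt_of_mem hj

variable [AddCommGroup ι] [LinearOrder ι] [IsOrderedAddMonoid ι] [GradedRing 𝒜]

theorem IsHomogeneous.coe_decompose_mul_mem_of_forall_lt (hI : I.IsHomogeneous 𝒜)
    {x y : A} (hxy : x * y ∈ I) {i j : ι} (hx : ∀ i' < i, (decompose 𝒜 x i' : A) * y ∈ I)
    (hy : ∀ j' < j, x * decompose 𝒜 y j' ∈ I) :
    (decompose 𝒜 x i : A) * decompose 𝒜 y j ∈ I := by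
  classical
  by_cases hsupp : i ∈ (decompose 𝒜 x).support ∧ j ∈ (decompose 𝒜 y).support
  swap
  · rw [not_and_or, DFinsupp.notMem_support_iff, DFinsupp.notMem_support_iff] at hsupp
    rcases hsupp with h | h <;> simp [h]
  set S := {p ∈ (decompose 𝒜 x).support ×ˢ (decompose 𝒜 y).support | p.1 + p.2 = i + j}
  have hij : (i, j) ∈ S := mem_filter.2 ⟨mem_product.2 hsupp, rfl⟩
  have hsum : (decompose 𝒜 (x * y) (i + j) : A) = (decompose 𝒜 x i : A) * decompose 𝒜 y j +
      ∑ p ∈ S.erase (i, j), (decompose 𝒜 x p.1 : A) * decompose 𝒜 y p.2 := by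
    rw [decompose_mul, coe_mul_apply]
    exact (add_sum_erase S _ hij).symm
  have hrest : ∑ p ∈ S.erase (i, j), (decompose 𝒜 x p.1 : A) * decompose 𝒜 y p.2 ∈ I := by
    refine sum_mem _ fun p hp => ?_
    obtain ⟨hne, hpS⟩ := mem_erase.1 hp
    rcases lt_or_lt_of_add_eq_add_of_ne (mem_filter.1 hpS).2 hne with h | h
    · exact hI.mul_coe_decompose_mem (SetLike.coe_mem _) (hx _ h) _
    · exact hI.coe_decompose_mul_mem (SetLike.coe_mem _) (hy _ h) _
  have htotal := hI (i + j) hxy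
  rw [hsum] at htotal
  exact (I.add_mem_iff_left hrest).1 htotal

theorem IsHomogeneous.colon_singleton_of_forall_lt (hI : I.IsHomogeneous 𝒜) {y : A} {j : ι}
    (hlow : ∀ j' < j, (decompose 𝒜 y j' : A) ∈ I)
    (hcolon : ∀ d, ∀ h ∈ 𝒜 d, h * decompose 𝒜 y j ∈ I → h * y ∈ I) :
    (I.colon {y}).IsHomogeneous 𝒜 := by
  classical
  intro i a ha
  simp only [mem_colon_singleton, smul_eq_mul] at ha ⊢
  by_contra hi
  set S := {i ∈ (decompose 𝒜 a).support | (decompose 𝒜 a i : A) * y ∉ I}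
  have hS : S.Nonempty :=
    ⟨i, mem_filter.2 ⟨DFinsupp.mem_support_iff.2 fun h0 => hi (by simp [h0]), hi⟩⟩
  apply (mem_filter.1 (S.min'_mem hS)).2
  refine hcolon _ _ (SetLike.coe_mem _) (hI.coe_decompose_mul_mem_of_forall_lt ha (fun i' hi' => ?_)
    fun j' hj' => I.mul_mem_left _ (hlow j' hj'))
  by_contra h
  refine (S.min'_le i' (mem_filter.2 ⟨DFinsupp.mem_support_iff.2 fun h0 => h ?_, h⟩)).not_gt hi'
  simp [h0]

theorem IsHomogeneous.colon_singleton_of_isPrime_s18 (hI : I.IsHomogeneous 𝒜) {y : A}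
    (hp : (I.colon {y}).IsPrime) : (I.colon {y}).IsHomogeneous 𝒜 := by
  induction hN : (quotSupport 𝒜 I y).card using Nat.strong_induction_on generalizing y
    with | _ N ih =>
  have hy : y ∉ I := fun hy => hp.ne_top <| (eq_top_iff_one _).2 <| by
    simpa [mem_colon_singleton] using hy
  have hne : (quotSupport 𝒜 I y).Nonempty := by
    by_contra! h
    exact hy (hI.mem_iff.2 fun j => not_not.1 fun hj => by simpa [h] using mem_quotSupport.2 hj)
  set j := (quotSupport 𝒜 I y).min' hne
  have hlow : ∀ j' < j, (decompose 𝒜 y j' : A) ∈ I := fun j' hj' => not_not.1 fun h =>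
    (min'_le _ j' (mem_quotSupport.2 h)).not_gt hj'
  by_cases hcolon : ∀ d, ∀ h ∈ 𝒜 d, h * decompose 𝒜 y j ∈ I → h * y ∈ I
  · exact hI.colon_singleton_of_forall_lt hlow hcolon
  push Not at hcolon
  obtain ⟨d, h, hh, hhj, hhy⟩ := hcolon
  have heq := colon_singleton_mul_of_notMem hp (by simpa [mem_colon_singleton] using hhy)
  rw [← heq] at hp ⊢
  exact ih _ (hN ▸ card_quotSupport_mul_lt hh (min'_mem _ hne) hhj) hp rfl

theorem IsHomogeneous.of_mem_associatedPrimes [IsNoetherianRing A] (hI : I.IsHomogeneous 𝒜)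
    {𝔭 : Ideal A} (h𝔭 : 𝔭 ∈ associatedPrimes A (A ⧸ I)) : 𝔭.IsHomogeneous 𝒜 := by
  obtain ⟨hp, x, rfl⟩ := isAssociatedPrime_iff.1 h𝔭
  obtain ⟨y, rfl⟩ := Quotient.mk_surjective x
  have hcolon : colon ⊥ {Quotient.mk I y} = I.colon {y} := by
    ext c
    simp [mem_colon_singleton, Algebra.smul_def, ← map_mul, Quotient.eq_zero_iff_mem]
  rw [hcolon] at hp ⊢
  exact hI.colon_singleton_of_isPrime_s18 hp

end Ideal

abbrev LinearOrder.withDecidableEq {α : Type*} (o : LinearOrder α) (d : DecidableEq α) :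
    LinearOrder α :=
  { o with
    toDecidableEq := d
    compare_eq_compareOfLessAndEq := fun a b => by
      rw [o.compare_eq_compareOfLessAndEq]
      congr! }

/-- Let `A` be a noetherian commutative ring graded by `ℤⁿ` (the free abelian group
`Fin n → ℤ`).  Then (i) for every prime ideal `𝔭` of `A`, the homogeneous core `𝔭*` is prime;
and (ii) for every homogeneous ideal `I`, every associated prime of `A ⧸ I` is homogeneous. -/
theorem homogeneousCore_isPrime_and_associatedPrimes_homogeneous
    (n : ℕ) {A : Type*} [CommRing A] [IsNoetherianRing A]
    (𝒜 : (Fin n → ℤ) → AddSubgroup A) [GradedRing 𝒜] :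
    (∀ 𝔭 : Ideal A, 𝔭.IsPrime → ((𝔭.homogeneousCore 𝒜).toIdeal).IsPrime) ∧
    (∀ I : Ideal A, I.IsHomogeneous 𝒜 →
      ∀ 𝔭 ∈ associatedPrimes A (A ⧸ I), 𝔭.IsHomogeneous 𝒜) := by
  -- `Lex.linearOrder` has classical decidable equality; with that of `Fin n → ℤ` instead,
  -- `‹GradedRing 𝒜›` is itself a grading by the ordered group `Lex (Fin n → ℤ)`.
  let _ : LinearOrder (Lex (Fin n → ℤ)) :=
    LinearOrder.withDecidableEq inferInstance (instDecidableEqLex _)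
  let _ : GradedRing (𝒜 ∘ ofLex) := ‹GradedRing 𝒜›
  exact ⟨fun 𝔭 h𝔭 => h𝔭.homogeneousCore (𝒜 := 𝒜 ∘ ofLex),
    fun I hI 𝔭 h𝔭 => Ideal.IsHomogeneous.of_mem_associatedPrimes (𝒜 := 𝒜 ∘ ofLex) hI h𝔭⟩
end
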